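/- If th^ω_Z(G) < |V(G)| − k for a nonnegative real ω and integer k, then there exists a standard zero forcing set B of G with a set of forces realizing pt(G;B) such that |B| + ω·pt(G;B) < |V(G)| − k and |B^(i)| > ω for every round i with 1 ≤ i ≤ pt(G;B), where B^(i) is the set of vertices forced in round i. -/

import Mathlib

/-!
If some round `i` of a zero forcing process from `B` forces at most `ω` vertices, adding those
vertices to `B` lets the process finish one round earlier: the cost `|B| + ω·pt` goes up by at
most `ω` for the extra vertices and down by exactly `ω` for the saved round. Starting from a set
whose cost is below the bound, repeating this strictly decreases the propagation time, so it
ends at a set all of whose rounds force more than `ω` vertices.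
-/

open SimpleGraph Set

/-- `v` can force `w` under the standard color change rule given blue set `B`. -/
def canForce {V : Type*} (G : SimpleGraph V) (B : Set V) (v w : V) : Prop :=
  v ∈ B ∧ w ∉ B ∧ G.Adj v w ∧ ∀ u, G.Adj v u → u ∉ B → u = w

/-- One simultaneous round of standard zero forcing. -/
def zfStep {V : Type*} (G : SimpleGraph V) (B : Set V) : Set V :=
  B ∪ {w | ∃ v, canForce G B v w}

/-- The blue set after `t` simultaneous rounds. -/
def zfIter {V : Type*} (G : SimpleGraph V) (B : Set V) : ℕ → Set V
  | 0 => B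
  | t + 1 => zfStep G (zfIter G B t)

/-- `B` is a standard zero forcing set of `G`. -/
def IsZFS {V : Type*} (G : SimpleGraph V) (B : Set V) : Prop :=
  ∃ t, zfIter G B t = Set.univ

/-- Propagation time of `B` in `G`. -/
noncomputable def zfpt {V : Type*} (G : SimpleGraph V) (B : Set V) : ℕ :=
  sInf {t | zfIter G B t = Set.univ}

/-- Weighted standard throttling number. -/
noncomputable def thw {V : Type*} (G : SimpleGraph V) (ω : ℝ) : ℝ :=
  sInf {x : ℝ | ∃ B : Set V, IsZFS G B ∧ x = (B.ncard : ℝ) + ω * (zfpt G B : ℝ)}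

section ZeroForcing

variable {V : Type*} (G : SimpleGraph V)

lemma zfStep_mono {B C : Set V} (h : B ⊆ C) : zfStep G B ⊆ zfStep G C := by
  rintro w (hw | ⟨v, hv, -, hadj, hall⟩)
  · exact Or.inl (h hw)
  · by_cases hwC : w ∈ C
    · exact Or.inl hwC
    · exact Or.inr ⟨v, h hv, hwC, hadj, fun u hu huC => hall u hu (fun huB => huC (h huB))⟩

lemma zfIter_mono {B C : Set V} (h : B ⊆ C) (t : ℕ) : zfIter G B t ⊆ zfIter G C t := by
  induction t with
  | zero => exact h
  | succ t ih => exact zfStep_mono G ih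

lemma subset_zfIter (B : Set V) (t : ℕ) : B ⊆ zfIter G B t := by
  induction t with
  | zero => exact subset_rfl
  | succ t ih => exact ih.trans subset_union_left

lemma zfIter_add (B : Set V) (s t : ℕ) :
    zfIter G B (s + t) = zfIter G (zfIter G B s) t := by
  induction t with
  | zero => rfl
  | succ t ih => exact congrArg (zfStep G) ih

lemma zfIter_zfpt {B : Set V} (h : IsZFS G B) : zfIter G B (zfpt G B) = univ :=
  Nat.sInf_mem h

lemma zfIter_succ_subset_zfIter_union_diff (B : Set V) (t : ℕ) :
    zfIter G B (t + 1) ⊆ zfIter G (B ∪ (zfIter G B (t + 1) \ zfIter G B t)) t := by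
  intro x hx
  by_cases hxt : x ∈ zfIter G B t
  · exact zfIter_mono G subset_union_left t hxt
  · exact subset_zfIter G _ t (Or.inr ⟨hx, hxt⟩)

lemma isZFS_union_diff_and_zfpt_lt {B : Set V} (hB : IsZFS G B) {t : ℕ} (ht : t < zfpt G B) :
    IsZFS G (B ∪ (zfIter G B (t + 1) \ zfIter G B t)) ∧
      zfpt G (B ∪ (zfIter G B (t + 1) \ zfIter G B t)) < zfpt G B := by
  set B' := B ∪ (zfIter G B (t + 1) \ zfIter G B t)
  have hdone : zfIter G B' (zfpt G B - 1) = univ := by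
    have hsplit : zfpt G B = t + 1 + (zfpt G B - (t + 1)) := by omega
    refine eq_univ_of_univ_subset ?_
    calc univ = zfIter G (zfIter G B (t + 1)) (zfpt G B - (t + 1)) := by
          rw [← zfIter_add, ← hsplit, zfIter_zfpt G hB]
      _ ⊆ zfIter G (zfIter G B' t) (zfpt G B - (t + 1)) :=
          zfIter_mono G (zfIter_succ_subset_zfIter_union_diff G B t) _
      _ = zfIter G B' (zfpt G B - 1) := by
          rw [← zfIter_add]; congr 1; omega
  exact ⟨⟨_, hdone⟩, (Nat.sInf_le hdone).trans_lt (by omega)⟩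

lemma exists_isZFS_cost_lt_of_thw_lt {ω c : ℝ} (hω : 0 ≤ ω) (h : thw G ω < c) :
    ∃ B : Set V, IsZFS G B ∧ (B.ncard : ℝ) + ω * (zfpt G B : ℝ) < c := by
  have hbdd : BddBelow {x : ℝ | ∃ B : Set V, IsZFS G B ∧ x = B.ncard + ω * zfpt G B} := by
    refine ⟨0, ?_⟩
    rintro _ ⟨B, -, rfl⟩
    positivity
  obtain ⟨_, ⟨B, hB, rfl⟩, hlt⟩ := (csInf_lt_iff hbdd ⟨_, univ, ⟨0, rfl⟩, rfl⟩).1 h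
  exact ⟨B, hB, hlt⟩

theorem exists_isZFS_cost_lt_and_round_card_gt {ω c : ℝ} (hω : 0 ≤ ω) {B : Set V}
    (hB : IsZFS G B) (hcost : (B.ncard : ℝ) + ω * (zfpt G B : ℝ) < c) :
    ∃ B : Set V, IsZFS G B ∧ (B.ncard : ℝ) + ω * (zfpt G B : ℝ) < c ∧
      ∀ i, 1 ≤ i → i ≤ zfpt G B →
        ω < ((zfIter G B i \ zfIter G B (i - 1)).ncard : ℝ) := by
  induction hn : zfpt G B using Nat.strong_induction_on generalizing B with
  | _ n ih =>
  subst hn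
  by_cases hgood : ∀ i, 1 ≤ i → i ≤ zfpt G B →
      ω < ((zfIter G B i \ zfIter G B (i - 1)).ncard : ℝ)
  · exact ⟨B, hB, hcost, hgood⟩
  push Not at hgood
  obtain ⟨i, hi1, hipt, hsmall⟩ := hgood
  obtain ⟨t, rfl⟩ : ∃ t, i = t + 1 := ⟨i - 1, by omega⟩
  simp only [Nat.add_sub_cancel] at hsmall
  set D := zfIter G B (t + 1) \ zfIter G B t
  obtain ⟨hB', hpt'⟩ := isZFS_union_diff_and_zfpt_lt G hB (t := t) (by omega)
  refine ih _ hpt' hB' ?_ rfl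
  have hcard : ((B ∪ D).ncard : ℝ) ≤ B.ncard + D.ncard := by exact_mod_cast ncard_union_le B D
  have hpt : (zfpt G (B ∪ D) : ℝ) + 1 ≤ zfpt G B := by exact_mod_cast hpt'
  have := mul_le_mul_of_nonneg_left hpt hω
  linarith

end ZeroForcing

theorem standard_witness_exists {V : Type*} [Fintype V] (G : SimpleGraph V)
    (ω : ℝ) (hω : 0 ≤ ω) (k : ℤ)
    (h : thw G ω < (Fintype.card V : ℝ) - (k : ℝ)) :
    ∃ B : Set V, IsZFS G B ∧
      (B.ncard : ℝ) + ω * (zfpt G B : ℝ) < (Fintype.card V : ℝ) - (k : ℝ) ∧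
      ∀ i, 1 ≤ i → i ≤ zfpt G B →
        ω < ((zfIter G B i \ zfIter G B (i - 1)).ncard : ℝ) := by
  obtain ⟨B, hB, hcost⟩ := exists_isZFS_cost_lt_of_thw_lt G hω h
  exact exists_isZFS_cost_lt_and_round_card_gt G hω hB hcost
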